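/- Suppose Assumptions 2.1 and 2.2 hold. For each pair (k,l) ∈ {1,2}² with k ≠ l and each p ∈ [1,∞), there exists a function η : (0,∞) → [0,∞) with η(ε) = o(ε^∞) as ε → 0 such that for every A ∈ L¹(ℝ^N) with A ≥ 0 a.e. and every small ε > 0, ‖χ_{Σ_k} · (m_ε ⋆ (Ψ_l A))‖_{L^p(ℝ^N)} ≤ η(ε) ‖A‖_{L¹(Ω_l)}. -/

import Mathlib

/-!
For `x ∈ Σ_k` and `y ∈ Ω_l ⊆ Σ_l` the points are at distance at least `η₀ := dist(Σ_k, Σ_l) > 0`,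
so only the tail of `m_ε` beyond radius `η₀` enters the convolution. That tail is bounded by
`tailSup (m_ε) η₀`, which is `o(ε^∞)` because `m_ε(z) = ε^{-N} m(z/ε)` and `m` decays faster
than any power. Bounding the integrand by `tailSup (m_ε) η₀ · ‖Ψ_l‖_∞ · χ_{Ω_l} A` and
integrating over the compact `Σ_k` gives the estimate.
-/

open MeasureTheory Filter Topology ENNReal

noncomputable section

/-- Euclidean space `ℝ^N`. -/
abbrev Euc (N : ℕ) : Type := EuclideanSpace ℝ (Fin N)

/-- The rescaled mutation kernel `m_ε(x) = ε^{-N} m(x/ε)`. -/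
noncomputable def mScaled {N : ℕ} (m : Euc N → ℝ) (ε : ℝ) (x : Euc N) : ℝ :=
  (ε ^ N)⁻¹ * m (ε⁻¹ • x)

/-- The fitness function `Ψ(x) = β(x) r(x) / (δ (θ + d(x)))`. -/
noncomputable def fitness {N : ℕ} (δ θ : ℝ) (β r d : Euc N → ℝ) (x : Euc N) : ℝ :=
  β x * r x / (δ * (θ + d x))

/-- Pointwise formula for the linear operator `L_k^ε φ = (Λ ξ_k/θ) m_ε ⋆ (Ψ_k φ)`. -/
noncomputable def Lfun {N : ℕ} (Λ θ ξk : ℝ) (Ψk : Euc N → ℝ) (m : Euc N → ℝ)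
    (ε : ℝ) (φ : Euc N → ℝ) (x : Euc N) : ℝ :=
  (Λ * ξk / θ) * ∫ y, mScaled m ε (x - y) * (Ψk y * φ y)

/-- Pointwise formula for the nonlinear operator
`T^ε(φ) = Σ_k L_k^ε(φ) / (1 + θ⁻¹ ∫ β_k φ)`. -/
noncomputable def Tfun {N : ℕ} (Λ θ : ℝ) (ξ : Fin 2 → ℝ) (Ψ β : Fin 2 → Euc N → ℝ)
    (m : Euc N → ℝ) (ε : ℝ) (φ : Euc N → ℝ) (x : Euc N) : ℝ :=
  ∑ k : Fin 2, Lfun Λ θ (ξ k) (Ψ k) m ε φ x / (1 + θ⁻¹ * ∫ y, β k y * φ y)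

/-- Pointwise formula for the one-host nonlinear operator
`T_k^ε(φ) = L_k^ε(φ) / (1 + θ⁻¹ ∫ β_k φ)`. -/
noncomputable def Tkfun {N : ℕ} (Λ θ ξk : ℝ) (Ψk βk : Euc N → ℝ) (m : Euc N → ℝ)
    (ε : ℝ) (φ : Euc N → ℝ) (x : Euc N) : ℝ :=
  Lfun Λ θ ξk Ψk m ε φ x / (1 + θ⁻¹ * ∫ y, βk y * φ y)

/-- `q(ε) = o(ε^∞)` as `ε → 0⁺` : for every `n`, `ε^{-n} q(ε) → 0`. -/
def LittleOInfty (q : ℝ → ℝ) : Prop :=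
  ∀ n : ℕ, Tendsto (fun ε => q ε / ε ^ n) (𝓝[>] (0 : ℝ)) (𝓝 0)

/-- Assumption 2.1 of the paper. -/
structure Assumption1 {N : ℕ} (ξ : Fin 2 → ℝ) (Λ θ δ : ℝ)
    (β d r : Fin 2 → Euc N → ℝ) (m : Euc N → ℝ) : Prop where
  ξ_pos : ∀ k, 0 < ξ k
  ξ_sum : ξ 0 + ξ 1 = 1
  Λ_pos : 0 < Λ
  θ_pos : 0 < θ
  δ_pos : 0 < δ
  β_cont : ∀ k, Continuous (β k)
  β_nonneg : ∀ k x, 0 ≤ β k x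
  β_bdd : ∀ k, ∃ C, ∀ x, β k x ≤ C
  d_cont : ∀ k, Continuous (d k)
  d_nonneg : ∀ k x, 0 ≤ d k x
  d_bdd : ∀ k, ∃ C, ∀ x, d k x ≤ C
  r_cont : ∀ k, Continuous (r k)
  r_nonneg : ∀ k x, 0 ≤ r k x
  r_bdd : ∀ k, ∃ C, ∀ x, r k x ≤ C
  Ψ_ne : ∀ k, ∃ x, fitness δ θ (β k) (r k) (d k) x ≠ 0
  Ψ_lim : ∀ k, Tendsto (fitness δ θ (β k) (r k) (d k)) (cocompact (Euc N)) (𝓝 0)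
  m_int : Integrable m
  m_bdd : ∃ C, ∀ x, m x ≤ C
  m_pos : ∀ᵐ x, 0 < m x
  m_symm : ∀ᵐ x, m (-x) = m x
  m_mass : ∫ x, m x = 1
  m_sup_int : ∀ R > 0,
    Integrable (fun x => ⨆ y : Metric.closedBall (0 : Euc N) R, m (x + (y : Euc N)))

/-- Assumption 2.2 of the paper: fast decay of the kernel and separated compact supports. -/
structure Assumption2 {N : ℕ} (β : Fin 2 → Euc N → ℝ) (m : Euc N → ℝ) : Prop where
  m_decay : ∀ n : ℕ, Tendsto (fun x : Euc N => ‖x‖ ^ n * m x) (cocompact (Euc N)) (𝓝 0)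
  β_suppcompact : ∀ k, HasCompactSupport (β k)
  supp_sep : ∃ η > 0, ∀ x ∈ tsupport (β 0), ∀ y ∈ tsupport (β 1), η ≤ dist x y

/-- Assumption 2.3 of the paper (nonnegative real spectrum and spectral gap) for the
family of operators `Lop k ε` on `L¹(ℝ^N)`. -/
def Assumption3 {N : ℕ}
    (Lop : Fin 2 → ℝ →
      (Lp ℝ 1 (volume : Measure (Euc N)) →L[ℝ] Lp ℝ 1 (volume : Measure (Euc N)))) : Prop :=
  (∀ k : Fin 2, ∀ ε > (0 : ℝ), spectrum ℝ (Lop k ε) ⊆ Set.Ici (0 : ℝ) ∧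
      (spectralRadius ℝ (Lop k ε)).toReal ∈ spectrum ℝ (Lop k ε)) ∧
  (∀ k : Fin 2, ∃ n : ℕ,
    0 < Filter.liminf (fun ε : ℝ =>
      ((spectralRadius ℝ (Lop k ε)).toReal -
        sSup (spectrum ℝ (Lop k ε) \ {(spectralRadius ℝ (Lop k ε)).toReal})) / ε ^ n)
      (𝓝[>] (0 : ℝ)))

/-- `R_{0,k} = (ξ_k Λ/θ) ‖Ψ_k‖_{L^∞}`. -/
noncomputable def R0k {N : ℕ} (ξk Λ θ : ℝ) (Ψk : Euc N → ℝ) : ℝ :=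
  ξk * Λ / θ * ⨆ x, Ψk x

/-- `R₀ = (Λ/θ) ‖ξ₁Ψ₁ + ξ₂Ψ₂‖_{L^∞}`. -/
noncomputable def R0 {N : ℕ} (ξ : Fin 2 → ℝ) (Λ θ : ℝ) (Ψ : Fin 2 → Euc N → ℝ) : ℝ :=
  Λ / θ * ⨆ x, (ξ 0 * Ψ 0 x + ξ 1 * Ψ 1 x)

/-- `A` is a nontrivial nonnegative fixed point of `T^ε` in `L¹(ℝ^N)`. -/
def IsFixedPointAe {N : ℕ} (Λ θ : ℝ) (ξ : Fin 2 → ℝ) (Ψ β : Fin 2 → Euc N → ℝ)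
    (m : Euc N → ℝ) (ε : ℝ) (A : Euc N → ℝ) : Prop :=
  Integrable A ∧ (0 ≤ᵐ[volume] A) ∧ ¬ (A =ᵐ[volume] (0 : Euc N → ℝ)) ∧
    A =ᵐ[volume] Tfun Λ θ ξ Ψ β m ε A

/-- `φ` is the (a.e. positive, `L¹`-normalised) principal eigenfunction of `L_k^ε`,
associated with the eigenvalue `ρ`. -/
def IsPrincipalEigenfun {N : ℕ} (Λ θ ξk : ℝ) (Ψk : Euc N → ℝ) (m : Euc N → ℝ) (ε : ℝ)
    (ρ : ℝ) (φ : Euc N → ℝ) : Prop :=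
  Integrable φ ∧ (∀ᵐ x, 0 < φ x) ∧ (∫ x, |φ x|) = 1 ∧
    (∀ᵐ x, Lfun Λ θ ξk Ψk m ε φ x = ρ * φ x)

/-- `ν_k^ε = θ (r_σ(L_k^ε) − 1) / ∫ β_k φ_k^{ε,1}`. -/
noncomputable def nuk {N : ℕ} (θ : ℝ) (βk : Euc N → ℝ) (ρ : ℝ) (φ : Euc N → ℝ) : ℝ :=
  θ * (ρ - 1) / ∫ x, βk x * φ x

open Set

/-- `⨆` over `ℝ` is `0` on unbounded families, so this is the supremum of `|f|` on
`{‖z‖ ≥ R}` only when `|f|` is bounded there. -/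
def tailSup {E : Type*} [Norm E] (f : E → ℝ) (R : ℝ) : ℝ :=
  ⨆ z : {z : E // R ≤ ‖z‖}, |f z|

section TailSup

variable {E : Type*} [Norm E] {f : E → ℝ} {R B : ℝ}

lemma tailSup_nonneg : 0 ≤ tailSup f R :=
  Real.iSup_nonneg fun _ => abs_nonneg _

lemma tailSup_le (hB : 0 ≤ B) (hf : ∀ z, R ≤ ‖z‖ → |f z| ≤ B) : tailSup f R ≤ B :=
  Real.iSup_le (fun z => hf z z.2) hB

lemma abs_le_tailSup (hf : ∀ z, R ≤ ‖z‖ → |f z| ≤ B) {z : E} (hz : R ≤ ‖z‖) :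
    |f z| ≤ tailSup f R :=
  le_ciSup (f := fun z : {z : E // R ≤ ‖z‖} => |f z|)
    ⟨B, by rintro _ ⟨w, rfl⟩; exact hf w w.2⟩ ⟨z, hz⟩

end TailSup

lemma LittleOInfty.const_mul {q : ℝ → ℝ} (hq : LittleOInfty q) (c : ℝ) :
    LittleOInfty fun ε => c * q ε := by
  intro n
  simpa [mul_div_assoc] using (hq n).const_mul c

section Kernel

variable {N : ℕ} {m : Euc N → ℝ}

lemma abs_mScaled {ε : ℝ} (hε : 0 < ε) (z : Euc N) :
    |mScaled m ε z| = (ε ^ N)⁻¹ * |m (ε⁻¹ • z)| := by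
  rw [mScaled, abs_mul, abs_of_pos (by positivity)]

lemma eventually_abs_mScaled_le_pow
    (hm : ∀ n : ℕ, Tendsto (fun x : Euc N => ‖x‖ ^ n * m x) (cocompact (Euc N)) (𝓝 0))
    {R : ℝ} (hR : 0 < R) (q : ℕ) :
    ∀ᶠ ε in 𝓝[>] 0, ∀ z : Euc N, R ≤ ‖z‖ → |mScaled m ε z| ≤ ε ^ q := by
  have hfar : ∀ᶠ w in cocompact (Euc N), ‖w‖ ^ (N + q) * |m w| ≤ R ^ (N + q) := by
    have hlt : |(0 : ℝ)| < R ^ (N + q) := by rw [abs_zero]; positivity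
    filter_upwards [(hm (N + q)).abs.eventually (eventually_le_nhds hlt)] with w hw
    simpa [abs_mul] using hw
  rw [← Metric.cobounded_eq_cocompact, ← comap_norm_atTop, eventually_comap,
    eventually_atTop] at hfar
  obtain ⟨S, hS⟩ := hfar
  have hRε : Tendsto (fun ε : ℝ => R * ε⁻¹) (𝓝[>] 0) atTop :=
    tendsto_inv_nhdsGT_zero.const_mul_atTop hR
  filter_upwards [self_mem_nhdsWithin, hRε.eventually_ge_atTop S] with ε (hε : 0 < ε) hεS z hz
  have hw : R * ε⁻¹ ≤ ‖ε⁻¹ • z‖ := by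
    rw [norm_smul, Real.norm_of_nonneg (by positivity), mul_comm]
    gcongr
  have hmw : (R * ε⁻¹) ^ (N + q) * |m (ε⁻¹ • z)| ≤ R ^ (N + q) :=
    le_trans (by gcongr) (hS _ (hεS.trans hw) _ rfl)
  have hmw_le : |m (ε⁻¹ • z)| ≤ ε ^ (N + q) := by
    rw [mul_pow, inv_pow, mul_assoc, mul_le_iff_le_one_right (by positivity),
      inv_mul_le_iff₀ (by positivity), mul_one] at hmw
    exact hmw
  rw [abs_mScaled hε, inv_mul_le_iff₀ (by positivity), ← pow_add]
  exact hmw_le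

lemma littleOInfty_tailSup_mScaled
    (hm : ∀ n : ℕ, Tendsto (fun x : Euc N => ‖x‖ ^ n * m x) (cocompact (Euc N)) (𝓝 0))
    {R : ℝ} (hR : 0 < R) : LittleOInfty fun ε => tailSup (mScaled m ε) R := by
  intro n
  apply squeeze_zero' (g := id)
  · filter_upwards [self_mem_nhdsWithin] with ε (hε : 0 < ε)
    exact div_nonneg tailSup_nonneg (by positivity)
  · filter_upwards [self_mem_nhdsWithin, eventually_abs_mScaled_le_pow hm hR (n + 1)]
      with ε (hε : 0 < ε) hbound
    rw [div_le_iff₀ (by positivity), id, ← pow_succ']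
    exact tailSup_le (by positivity) hbound
  · exact tendsto_id.mono_left nhdsWithin_le_nhds

end Kernel

lemma support_fitness_subset {N : ℕ} (δ θ : ℝ) (β r d : Euc N → ℝ) :
    Function.support (fitness δ θ β r d) ⊆ Function.support β := by
  intro x hx hβ
  exact hx (by simp [fitness, hβ])

namespace Assumption1

variable {N : ℕ} {ξ : Fin 2 → ℝ} {Λ θ δ : ℝ} {β d r : Fin 2 → Euc N → ℝ} {m : Euc N → ℝ}

lemma fitness_nonneg (h : Assumption1 ξ Λ θ δ β d r m) (k : Fin 2) (x : Euc N) :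
    0 ≤ fitness δ θ (β k) (r k) (d k) x := by
  have := h.d_nonneg k x
  have := h.θ_pos
  exact div_nonneg (mul_nonneg (h.β_nonneg k x) (h.r_nonneg k x))
    (mul_nonneg h.δ_pos.le (by linarith))

lemma exists_fitness_le (h : Assumption1 ξ Λ θ δ β d r m) (k : Fin 2) :
    ∃ C, ∀ x, fitness δ θ (β k) (r k) (d k) x ≤ C := by
  obtain ⟨Cβ, hCβ⟩ := h.β_bdd k
  obtain ⟨Cr, hCr⟩ := h.r_bdd k
  have hθ := h.θ_pos
  have hδ := h.δ_pos
  refine ⟨Cβ * Cr / (δ * θ), fun x => ?_⟩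
  have hd := h.d_nonneg k x
  have hCβ0 : 0 ≤ Cβ := (h.β_nonneg k x).trans (hCβ x)
  have hCr0 : 0 ≤ Cr := (h.r_nonneg k x).trans (hCr x)
  exact div_le_div₀ (by positivity) (mul_le_mul (hCβ x) (hCr x) (h.r_nonneg k x) hCβ0)
    (by positivity) (by nlinarith)

lemma continuous_fitness (h : Assumption1 ξ Λ θ δ β d r m) (k : Fin 2) :
    Continuous (fitness δ θ (β k) (r k) (d k)) := by
  have hθ := h.θ_pos
  have hδ := h.δ_pos
  exact ((h.β_cont k).mul (h.r_cont k)).div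
    (continuous_const.mul (continuous_const.add (h.d_cont k)))
    (fun x => by have := h.d_nonneg k x; positivity)

end Assumption1

lemma Assumption2.exists_pos_le_dist {N : ℕ} {β : Fin 2 → Euc N → ℝ} {m : Euc N → ℝ}
    (h : Assumption2 β m) {k l : Fin 2} (hkl : k ≠ l) :
    ∃ η > 0, ∀ x ∈ tsupport (β k), ∀ y ∈ tsupport (β l), η ≤ dist x y := by
  obtain ⟨η, hη, hsep⟩ := h.supp_sep
  refine ⟨η, hη, ?_⟩
  fin_cases k <;> fin_cases l
  · exact absurd rfl hkl
  · exact hsep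
  · exact fun x hx y hy => dist_comm x y ▸ hsep y hy x hx
  · exact absurd rfl hkl

lemma norm_integral_mul_le_mul_setIntegral {α : Type*} [MeasurableSpace α] {μ : Measure α}
    {g Ψ A : α → ℝ} {c C : ℝ} (hΨ : Measurable Ψ) (hΨ0 : ∀ y, 0 ≤ Ψ y) (hΨC : ∀ y, Ψ y ≤ C)
    (hg : ∀ y, 0 < Ψ y → |g y| ≤ c) (hA : Integrable A μ) (hA0 : 0 ≤ᵐ[μ] A) :
    ‖∫ y, g y * (Ψ y * A y) ∂μ‖ ≤ c * C * ∫ y in {y | 0 < Ψ y}, A y ∂μ := by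
  have hΩ : MeasurableSet {y | 0 < Ψ y} := measurableSet_lt measurable_const hΨ
  rw [← integral_indicator hΩ, ← integral_const_mul]
  refine norm_integral_le_of_norm_le ((hA.indicator hΩ).const_mul _) ?_
  filter_upwards [hA0] with y hAy
  rcases (hΨ0 y).eq_or_lt with hΨy | hΨy
  · simp [← hΨy]
  · rw [indicator_of_mem (show y ∈ {y | 0 < Ψ y} from hΨy), Real.norm_eq_abs, abs_mul,
      abs_mul, abs_of_pos hΨy, abs_of_nonneg hAy, ← mul_assoc]
    gcongr
    · exact (abs_nonneg _).trans (hg y hΨy)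
    · exact hg y hΨy
    · exact hΨC y

lemma eLpNorm_indicator_le_of_forall_norm_le {α F : Type*} [MeasurableSpace α]
    [NormedAddCommGroup F] {μ : Measure α} {p : ℝ≥0∞} {f : α → F} {s : Set α}
    (hs : MeasurableSet s) {C : ℝ} (hf : ∀ x ∈ s, ‖f x‖ ≤ C) :
    eLpNorm (s.indicator f) p μ ≤ μ s ^ p.toReal⁻¹ * ENNReal.ofReal C := by
  rw [eLpNorm_indicator_eq_eLpNorm_restrict hs]
  simpa using eLpNorm_le_of_ae_bound (μ := μ.restrict s) (p := p)
    ((ae_restrict_iff' hs).2 (Eventually.of_forall hf))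

theorem statement11_general {N : ℕ} (ξ : Fin 2 → ℝ) (Λ θ δ : ℝ)
    (β d r : Fin 2 → Euc N → ℝ) (m : Euc N → ℝ)
    (h1 : Assumption1 ξ Λ θ δ β d r m)
    (Ψ : Fin 2 → Euc N → ℝ) (hΨ : ∀ k, Ψ k = fitness δ θ (β k) (r k) (d k))
    (h2 : Assumption2 β m)
    (k l : Fin 2) (hkl : k ≠ l) (p : ℝ) (hp : 1 ≤ p) :
    ∃ η : ℝ → ℝ, (∀ ε, 0 ≤ η ε) ∧ LittleOInfty η ∧
      ∃ ε₀ > (0 : ℝ), ∀ ε ∈ Set.Ioc (0 : ℝ) ε₀,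
        ∀ A : Euc N → ℝ, Integrable A → (0 ≤ᵐ[volume] A) →
          eLpNorm (Set.indicator (tsupport (β k))
              (fun x => ∫ y, mScaled m ε (x - y) * (Ψ l y * A y)))
            (ENNReal.ofReal p) volume ≤
          ENNReal.ofReal (η ε * ∫ x in {z : Euc N | 0 < Ψ l z}, A x) := by
  simp only [hΨ]
  obtain ⟨η₀, hη₀, hsep⟩ := h2.exists_pos_le_dist hkl
  obtain ⟨C, hC⟩ := h1.exists_fitness_le l
  have hC0 : 0 ≤ C := (h1.fitness_nonneg l 0).trans (hC 0)
  obtain ⟨V, hV0, hV⟩ : ∃ V : ℝ, 0 ≤ V ∧ volume (tsupport (β k)) ^ p⁻¹ = ENNReal.ofReal V :=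
    ⟨_, ENNReal.toReal_nonneg, (ENNReal.ofReal_toReal (ENNReal.rpow_ne_top_of_nonneg
      (by positivity) (h2.β_suppcompact k).isCompact.measure_lt_top.ne)).symm⟩
  -- `q = 0`: for `ε ≤ ε₀` the tail of `m_ε` is bounded, so `tailSup` is a genuine supremum.
  obtain ⟨ε₀, hε₀, hbdd⟩ := mem_nhdsGT_iff_exists_Ioc_subset.1
    (eventually_abs_mScaled_le_pow h2.m_decay hη₀ 0)
  refine ⟨fun ε => V * C * tailSup (mScaled m ε) η₀,
    fun ε => mul_nonneg (by positivity) tailSup_nonneg,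
    (littleOInfty_tailSup_mScaled h2.m_decay hη₀).const_mul _, ε₀, hε₀,
    fun ε hε A hA hA0 => ?_⟩
  have hconv : ∀ x ∈ tsupport (β k),
      ‖∫ y, mScaled m ε (x - y) * (fitness δ θ (β l) (r l) (d l) y * A y)‖ ≤
        tailSup (mScaled m ε) η₀ * C * ∫ y in {y | 0 < fitness δ θ (β l) (r l) (d l) y}, A y :=
    fun x hx => norm_integral_mul_le_mul_setIntegral (h1.continuous_fitness l).measurable
      (h1.fitness_nonneg l) hC (fun y hy => abs_le_tailSup (hbdd hε) <| by
        have hy' := subset_tsupport _ (support_fitness_subset _ _ _ _ _ hy.ne')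
        simpa [dist_eq_norm] using hsep x hx y hy') hA hA0
  have hLp := eLpNorm_indicator_le_of_forall_norm_le (μ := volume) (p := ENNReal.ofReal p)
    (isClosed_tsupport _).measurableSet hconv
  rw [ENNReal.toReal_ofReal (by linarith), hV, ← ENNReal.ofReal_mul hV0] at hLp
  exact hLp.trans_eq (by ring_nf)

/-- Lemma 4.2 (b).  Under Assumptions 2.1 and 2.2, for `k ≠ l` and
`p ∈ [1,∞)`, there is an `o(ε^∞)` function `η`, independent of `A`, such that
`‖χ_{Σ_k} (m_ε ⋆ (Ψ_l A))‖_{L^p} ≤ η(ε) ‖A‖_{L¹(Ω_l)}` for every nonnegative `A ∈ L¹` and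
every small `ε > 0`. -/
theorem statement11 {N : ℕ} (hN : 1 ≤ N) (ξ : Fin 2 → ℝ) (Λ θ δ : ℝ)
    (β d r : Fin 2 → Euc N → ℝ) (m : Euc N → ℝ)
    (h1 : Assumption1 ξ Λ θ δ β d r m)
    (Ψ : Fin 2 → Euc N → ℝ) (hΨ : ∀ k, Ψ k = fitness δ θ (β k) (r k) (d k))
    (h2 : Assumption2 β m)
    (k l : Fin 2) (hkl : k ≠ l) (p : ℝ) (hp : 1 ≤ p) :
    ∃ η : ℝ → ℝ, (∀ ε, 0 ≤ η ε) ∧ LittleOInfty η ∧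
      ∃ ε₀ > (0 : ℝ), ∀ ε ∈ Set.Ioc (0 : ℝ) ε₀,
        ∀ A : Euc N → ℝ, Integrable A → (0 ≤ᵐ[volume] A) →
          eLpNorm (Set.indicator (tsupport (β k))
              (fun x => ∫ y, mScaled m ε (x - y) * (Ψ l y * A y)))
            (ENNReal.ofReal p) volume ≤
          ENNReal.ofReal (η ε * ∫ x in {z : Euc N | 0 < Ψ l z}, A x) :=
  statement11_general ξ Λ θ δ β d r m h1 Ψ hΨ h2 k l hkl p hp
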